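/- arXiv:1507.07053 — 2 statements merged into one kernel-verified Lean document; each statement's English description precedes it below -/
import Mathlib

section
/- Let q, p ∈ ℂ with q ≠ 0 and p² = q, and let Q1, Q2, Q3 ∈ ℂ. Then, as linear operators on ℂ[[x]], H̃ = (1 − Q1Q2 q² S') ∘ K̃. -/
/-- The substitution operator on `ℂ[[x]]` sending the `k`-th coefficient `c_k`
to `a^k c_k`; for `a = q⁻¹` this is the operator `S'`, `(S'f)(x) = f(q⁻¹x)`. -/
noncomputable def Sop (a : ℂ) : Module.End ℂ (PowerSeries ℂ) where
  toFun f := PowerSeries.rescale a f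
  map_add' f g := map_add _ f g
  map_smul' c f := by
    ext n
    simp [PowerSeries.coeff_rescale]
    ring

/-- Multiplication by `x` on `ℂ[[x]]`. -/
noncomputable def Mop : Module.End ℂ (PowerSeries ℂ) :=
  LinearMap.mulLeft ℂ (PowerSeries.X : PowerSeries ℂ)

/-- The operator `H̃(x, q^{x∂x})` of Section 5.2 of the paper, with
`S' = Sop q⁻¹` (the substitution `x ↦ q⁻¹x`). -/
noncomputable def Htop (q p Q1 Q2 Q3 : ℂ) : Module.End ℂ (PowerSeries ℂ) :=
  (1 - (Q1 * Q2 * q ^ 2) • Sop q⁻¹) * (1 - (Q1 * Q2 * q) • Sop q⁻¹)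
  + ((1 + Q1 * Q3) * p) • (Mop * (1 - (Q1 * Q2 * q) • Sop q⁻¹))
  + (Q1 * Q3 * q) • (Mop * Mop)
  - (1 - (Q1 * Q2 * q ^ 2) • Sop q⁻¹) * (1 - (Q1 * Q2 * q) • Sop q⁻¹) * Sop q⁻¹
  - (Q1 * (1 + Q2 * Q3) * p) • (Mop * (1 - (Q1 * Q2 * q) • Sop q⁻¹) * Sop q⁻¹)
  - (Q1 ^ 2 * Q2 * Q3 * q) • (Mop * Mop * Sop q⁻¹)

/-- The operator `K̃(x, q^{x∂x})` of Section 5.2 of the paper. -/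
noncomputable def Ktop (q p Q1 Q2 Q3 : ℂ) : Module.End ℂ (PowerSeries ℂ) :=
  (1 - (Q1 * Q2 * q) • Sop q⁻¹) * (1 - Sop q⁻¹)
  + ((1 + Q1 * Q3) * p) • Mop
  - (Q1 * (1 + Q2 * Q3) * p) • (Mop * Sop q⁻¹)
  + (Q1 * Q3 * q) • (Mop * Mop)

lemma Sop_mul_Mop (a : ℂ) : Sop a * Mop = a • (Mop * Sop a) := by
  ext f : 1
  show PowerSeries.rescale a (PowerSeries.X * f) = a • (PowerSeries.X * PowerSeries.rescale a f)
  rw [map_mul, PowerSeries.rescale_X]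
  simp [PowerSeries.smul_eq_C_mul, mul_assoc]

/-- the factorization
`H̃(x, q^{x∂x}) = (1 − Q1Q2 q² q^{−x∂x}) K̃(x, q^{x∂x})`
of Section 5.2 of the paper, as linear operators on `ℂ[[x]]`. -/
theorem closed_topological_vertex_Htilde_factorization
    (q p Q1 Q2 Q3 : ℂ) (hq : q ≠ 0) (hp : p ^ 2 = q) :
    Htop q p Q1 Q2 Q3 = (1 - (Q1 * Q2 * q ^ 2) • Sop q⁻¹) * Ktop q p Q1 Q2 Q3 := by
  have h := Sop_mul_Mop q⁻¹
  have h2 : ∀ x : Module.End ℂ (PowerSeries ℂ),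
      Sop q⁻¹ * (Mop * x) = q⁻¹ • (Mop * (Sop q⁻¹ * x)) := by
    intro x
    rw [← mul_assoc, h, smul_mul_assoc, mul_assoc]
  unfold Htop Ktop
  simp only [mul_sub, sub_mul, mul_add, add_mul, mul_one, one_mul, smul_mul_assoc,
    mul_smul_comm, smul_smul, mul_assoc, h, h2, smul_add, smul_sub]
  match_scalars <;> field_simp <;> ring
end

section
/- Let q, p ∈ ℂ with q ≠ 0 and p² = q, and let Q1, Q2, Q3 ∈ ℂ with Q1Q2 ≠ q^n for every integer n. Then for every f ∈ ℂ[[x]], H̃ f = 0 if and only if K̃ f = 0. -/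
/-
`S' = Sop q⁻¹` is diagonal in the monomial basis and satisfies the q-commutation relation
`M S' = q S' M`. Pushing every `M` to the right of `S'` with it shows `H̃ = (1 - Q1Q2q² S') K̃`
as operators. The left factor multiplies the `n`-th coefficient by `1 - Q1Q2 q^{2-n}`, which
never vanishes for generic `Q1Q2`, so it is injective and `H̃f = 0 ↔ K̃f = 0`.
-/

theorem Sop_apply (a : ℂ) (f : PowerSeries ℂ) : Sop a f = PowerSeries.rescale a f := rfl

theorem Mop_apply (f : PowerSeries ℂ) : Mop f = PowerSeries.X * f := rfl

theorem Sop_Mop_apply (a : ℂ) (f : PowerSeries ℂ) : Sop a (Mop f) = a • Mop (Sop a f) := by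
  rw [Sop_apply, Sop_apply, Mop_apply, Mop_apply, map_mul, PowerSeries.rescale_X,
    PowerSeries.smul_eq_C_mul, mul_assoc]

theorem Mop_Sop_inv_apply {q : ℂ} (hq : q ≠ 0) (f : PowerSeries ℂ) :
    Mop (Sop q⁻¹ f) = q • Sop q⁻¹ (Mop f) := by
  rw [Sop_Mop_apply, smul_smul, mul_inv_cancel₀ hq, one_smul]

theorem Htop_eq_mul_Ktop {q : ℂ} (hq : q ≠ 0) (p Q1 Q2 Q3 : ℂ) :
    Htop q p Q1 Q2 Q3 = (1 - (Q1 * Q2 * q ^ 2) • Sop q⁻¹) * Ktop q p Q1 Q2 Q3 := by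
  ext1 f
  simp only [Htop, Ktop, Module.End.mul_apply, LinearMap.sub_apply, LinearMap.add_apply,
    LinearMap.smul_apply, Module.End.one_apply, map_add, map_sub, map_smul,
    Mop_Sop_inv_apply hq]
  match_scalars <;> ring

theorem coeff_one_sub_smul_Sop (a c : ℂ) (n : ℕ) (f : PowerSeries ℂ) :
    PowerSeries.coeff n ((1 - c • Sop a) f) = (1 - c * a ^ n) * PowerSeries.coeff n f := by
  simp only [LinearMap.sub_apply, LinearMap.smul_apply, Module.End.one_apply, map_sub,
    PowerSeries.coeff_smul, Sop_apply, PowerSeries.coeff_rescale, smul_eq_mul]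
  ring

theorem one_sub_smul_Sop_injective {a c : ℂ} (h : ∀ n : ℕ, c * a ^ n ≠ 1) :
    Function.Injective (1 - c • Sop a : Module.End ℂ (PowerSeries ℂ)) := by
  refine (injective_iff_map_eq_zero _).2 fun f hf => PowerSeries.ext fun n => ?_
  have hn := congrArg (PowerSeries.coeff n) hf
  rw [coeff_one_sub_smul_Sop, map_zero] at hn
  exact (mul_eq_zero.1 hn).resolve_left (sub_ne_zero.2 (h n).symm)

theorem closed_topological_vertex_Htilde_reduces_to_Ktilde_general
    (q p Q1 Q2 Q3 : ℂ) (hq : q ≠ 0)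
    (hgen : ∀ n : ℤ, Q1 * Q2 ≠ q ^ n) :
    ∀ f : PowerSeries ℂ, Htop q p Q1 Q2 Q3 f = 0 ↔ Ktop q p Q1 Q2 Q3 f = 0 := by
  have hres : ∀ n : ℕ, Q1 * Q2 * q ^ 2 * q⁻¹ ^ n ≠ 1 := by
    intro n h
    apply hgen (n - 2)
    rw [zpow_sub₀ hq, zpow_natCast, eq_div_iff (zpow_ne_zero _ hq)]
    calc Q1 * Q2 * q ^ 2 = Q1 * Q2 * q ^ 2 * q⁻¹ ^ n * q ^ n := by
          rw [mul_assoc _ (q⁻¹ ^ n), ← mul_pow, inv_mul_cancel₀ hq, one_pow, mul_one]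
      _ = q ^ n := by rw [h, one_mul]
  intro f
  rw [Htop_eq_mul_Ktop hq, Module.End.mul_apply]
  exact map_eq_zero_iff _ (one_sub_smul_Sop_injective hres)

/-- the Ψ̃-half of Theorem 4 of the paper: for generic values of
`Q1, Q2` (i.e. `Q1Q2 ≠ qⁿ` for every integer `n`), `H̃f = 0` iff `K̃f = 0`. -/
theorem closed_topological_vertex_Htilde_reduces_to_Ktilde
    (q p Q1 Q2 Q3 : ℂ) (hq : q ≠ 0) (hp : p ^ 2 = q)
    (hgen : ∀ n : ℤ, Q1 * Q2 ≠ q ^ n) :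
    ∀ f : PowerSeries ℂ, Htop q p Q1 Q2 Q3 f = 0 ↔ Ktop q p Q1 Q2 Q3 f = 0 :=
  closed_topological_vertex_Htilde_reduces_to_Ktilde_general q p Q1 Q2 Q3 hq hgen
end
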